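/- The softplus-modified safety controller satisfies the control barrier function inequality: if Ψ = L_f h + L_g h · u_d + α(h) and L_g h ≠ 0, then the control u = u_d + (1/c)·log(1 + exp(−c·Ψ))·L_g h/‖L_g h‖², with c > 0, satisfies L_f h + L_g h · u ≥ −α(h). -/
import Mathlib


open RealInnerProductSpace

theorem softplus_controller_satisfies_cbf {m : ℕ}
    (Lfh αh : ℝ) (Lgh ud : EuclideanSpace ℝ (Fin m)) (hLg : Lgh ≠ 0)
    (c : ℝ) (hc : 0 < c) :
    Lfh + ⟪Lgh, ud + ((1/c) * Real.log (1 + Real.exp (-c * (Lfh + ⟪Lgh, ud⟫ + αh)))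
        / ‖Lgh‖^2) • Lgh⟫ + αh ≥ 0 := by
  set Ψ := Lfh + ⟪Lgh, ud⟫ + αh with hΨ
  have hn : (0:ℝ) < ‖Lgh‖^2 := by have := norm_pos_iff.mpr hLg; positivity
  rw [inner_add_right, real_inner_smul_right, real_inner_self_eq_norm_sq]
  have key : (1/c) * Real.log (1 + Real.exp (-c * Ψ)) ≥ -Ψ := by
    have h1 : Real.exp (-c * Ψ) ≤ 1 + Real.exp (-c * Ψ) := by linarith
    have h2 : Real.log (Real.exp (-c * Ψ)) ≤ Real.log (1 + Real.exp (-c * Ψ)) :=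
      Real.log_le_log (Real.exp_pos _) h1
    rw [Real.log_exp] at h2
    rw [ge_iff_le, neg_le]
    calc -(1/c * Real.log (1 + Real.exp (-c * Ψ))) ≤ -(1/c * (-c * Ψ)) := by
          have := mul_le_mul_of_nonneg_left h2 (le_of_lt (one_div_pos.mpr hc))
          linarith
      _ = Ψ := by field_simp
  have : (1/c) * Real.log (1 + Real.exp (-c * Ψ)) / ‖Lgh‖^2 * ‖Lgh‖^2
      = (1/c) * Real.log (1 + Real.exp (-c * Ψ)) := by field_simp
  nlinarith [key]
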